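/- For p = 3, s = 2: for every integer n ≥ 1 and every integer b with 0 ≤ b < 3(n+1) and 3 | b, one has M_{3,2,n}(b) > 0. -/

import Mathlib

/-!
Roots-of-unity filter: with `N = 3(n+1)` and `ζ` a primitive `N`-th root of unity,
`N · M(b) = ∑_{m<N} ζ^{-mb} T(ζ^m)`, where `ζ^{-mb}` is written `(ζ^m)^(N-b)` and
`T(x) = ∏_{a<N, 3∤a} (1 - x^a)²`. For `x` of order `d`, `T(x) = 0` unless `3 ∣ d`, and then
`T(x) = 3^(2N/d)`: over one period `∏_{0<r<d} (1 - x^r) = d`, while the factors with `3 ∣ r`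
multiply to `d/3`. The two points of order `3`, `m = n+1` and `m = 2(n+1)`, contribute
`3^(2(n+1))` each because `3 ∣ b`; every other point has `T = 0` or order at least `6`, hence
contributes at most `3^(n+1)` in absolute value. Since `3(n+1) - 2 < 2·3^(n+1)`, the two dominant
terms win.
-/

open Polynomial Finset

/-- The polynomial `T_{p,s,n}(q) = ∏_{j=0}^n ∏_{k=1}^{p-1} (1 - q^{pj+k})^s`. -/
noncomputable def borweinPoly (p s n : ℕ) : Polynomial ℤ :=
  ∏ j ∈ Finset.range (n + 1), ∏ k ∈ Finset.Icc 1 (p - 1),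
    (1 - Polynomial.X ^ (p * j + k)) ^ s

/-- The coefficient `t_{i,p,s}` of `q^i` in `T_{p,s,n}(q)`. -/
noncomputable def borweinCoeff (p s n i : ℕ) : ℤ := (borweinPoly p s n).coeff i

/-- The degree `d_{p,s,n} = p(p-1)s(n+1)^2/2` of `T_{p,s,n}`. -/
def borweinDeg (p s n : ℕ) : ℕ := p * (p - 1) * s * (n + 1) ^ 2 / 2

/-- `M_{p,s,n}(b) = ∑_{ℓ ≥ 0} t_{b + ℓ·p(n+1), p, s}`, a finite sum since the
coefficients vanish beyond the degree `d_{p,s,n}`. -/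
noncomputable def borweinM (p s n b : ℕ) : ℤ :=
  ∑ l ∈ Finset.range (borweinDeg p s n + 1), borweinCoeff p s n (b + l * (p * (n + 1)))

@[to_additive sum_range_mul_eq_sum_sum]
theorem Finset.prod_range_mul_eq_prod_prod {M : Type*} [CommMonoid M] (f : ℕ → M) (L N : ℕ) :
    ∏ i ∈ range (L * N), f i = ∏ l ∈ range L, ∏ r ∈ range N, f (l * N + r) := by
  induction L with
  | zero => simp
  | succ L ih => rw [Nat.succ_mul, prod_range_add, ih, prod_range_succ]

theorem Function.Periodic.prod_range_mul {M : Type*} [CommMonoid M] {f : ℕ → M} {N : ℕ}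
    (hf : Function.Periodic f N) (L : ℕ) :
    ∏ i ∈ range (L * N), f i = (∏ r ∈ range N, f r) ^ L := by
  have hshift (l r : ℕ) : f (l * N + r) = f r := by
    rw [add_comm]
    exact_mod_cast hf.nat_mul l r
  simp only [prod_range_mul_eq_prod_prod, hshift, prod_const, card_range]

theorem norm_sum_sub_add_le {ι E : Type*} [DecidableEq ι] [SeminormedAddCommGroup E]
    {s : Finset ι} {i j : ι} {f : ι → E} {B : ℝ} (hi : i ∈ s) (hj : j ∈ s)
    (hij : i ≠ j) (hB : ∀ k ∈ s, k ≠ i → k ≠ j → ‖f k‖ ≤ B) :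
    ‖∑ k ∈ s, f k - (f i + f j)‖ ≤ (#s - 2 : ℝ) * B := by
  have hj' : j ∈ s.erase i := mem_erase.mpr ⟨hij.symm, hj⟩
  have hcard : (#((s.erase i).erase j) : ℝ) = #s - 2 := by
    rw [← card_erase_add_one hi, ← card_erase_add_one hj']
    push_cast
    ring
  rw [← add_sum_erase s f hi, ← add_sum_erase _ f hj', add_sub_add_left_eq_sub,
    add_sub_cancel_left, ← hcard, ← nsmul_eq_mul, ← sum_const]
  refine norm_sum_le_of_le _ fun k hk => ?_
  obtain ⟨hkj, hk'⟩ := mem_erase.mp hk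
  obtain ⟨hki, hks⟩ := mem_erase.mp hk'
  exact hB k hks hki hkj

theorem Nat.Ico_one_filter_dvd_eq_image {p e : ℕ} (hp : 0 < p) :
    {r ∈ Ico 1 (e * p) | p ∣ r} = (Ico 1 e).image (· * p) := by
  ext r
  simp only [mem_filter, mem_Ico, mem_image]
  constructor
  · rintro ⟨⟨h1, hlt⟩, t, rfl⟩
    refine ⟨t, ⟨?_, ?_⟩, mul_comm t p⟩
    · exact Nat.pos_of_mul_pos_left h1
    · rw [mul_comm p] at hlt
      exact Nat.lt_of_mul_lt_mul_right hlt
  · rintro ⟨t, ⟨h1, hlt⟩, rfl⟩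
    exact ⟨⟨Nat.mul_pos h1 hp, Nat.mul_lt_mul_of_pos_right hlt hp⟩, dvd_mul_left p t⟩

section RootsOfUnity

variable {R : Type*} [CommRing R] [IsDomain R]

theorem IsPrimitiveRoot.geom_sum_pow_eq_ite {ζ : R} {N : ℕ} (hζ : IsPrimitiveRoot ζ N)
    (j : ℕ) :
    ∑ m ∈ range N, (ζ ^ j) ^ m = if N ∣ j then (N : R) else 0 := by
  split_ifs with h
  · simp [(hζ.pow_eq_one_iff_dvd j).mpr h]
  · have hmul := geom_sum_mul (ζ ^ j) N
    rw [← pow_mul, mul_comm j, pow_mul, hζ.pow_eq_one, one_pow, sub_self] at hmul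
    exact (mul_eq_zero.mp hmul).resolve_right
      (sub_ne_zero.mpr fun h1 => h ((hζ.pow_eq_one_iff_dvd j).mp h1))

theorem IsPrimitiveRoot.sum_pow_mul_eval_eq {ζ : R} {N b c L : ℕ} (hζ : IsPrimitiveRoot ζ N)
    (hb : b < N) (hbc : N ∣ b + c) {P : R[X]} (hP : P.natDegree < L * N) :
    ∑ m ∈ range N, (ζ ^ m) ^ c * P.eval (ζ ^ m) =
      N * ∑ l ∈ range L, P.coeff (b + l * N) := by
  have select (l : ℕ) {r : ℕ} (hr : r < N) : N ∣ c + (l * N + r) ↔ r = b := by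
    have hcb : c + b ≡ 0 [MOD N] := Nat.modEq_zero_iff_dvd.mpr (add_comm b c ▸ hbc)
    have hl : c + (l * N + r) ≡ c + r [MOD N] :=
      (Nat.ModEq.refl c).add (by rw [Nat.ModEq, add_comm, Nat.add_mul_mod_self_right])
    rw [← Nat.modEq_zero_iff_dvd]
    constructor
    · exact fun h => ((hl.symm.trans (h.trans hcb.symm)).add_left_cancel' c).eq_of_lt_of_lt hr hb
    · rintro rfl
      exact hl.trans hcb
  calc ∑ m ∈ range N, (ζ ^ m) ^ c * P.eval (ζ ^ m)
      = ∑ i ∈ range (L * N), P.coeff i * ∑ m ∈ range N, (ζ ^ (c + i)) ^ m := by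
        simp_rw [eval_eq_sum_range' hP, mul_sum]
        rw [sum_comm]
        exact sum_congr rfl fun i _ => sum_congr rfl fun m _ => by ring
    _ = ∑ l ∈ range L, ∑ r ∈ range N,
          P.coeff (l * N + r) * if r = b then (N : R) else 0 := by
        simp_rw [hζ.geom_sum_pow_eq_ite]
        rw [sum_range_mul_eq_sum_sum]
        exact sum_congr rfl fun l _ => sum_congr rfl fun r hr => by
          simp only [select l (mem_range.mp hr)]
    _ = N * ∑ l ∈ range L, P.coeff (b + l * N) := by
        simp [hb, mul_sum, mul_comm, add_comm]

theorem IsPrimitiveRoot.prod_Ico_one_sub_pow {x : R} {d : ℕ} (hx : IsPrimitiveRoot x d)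
    (hd : 0 < d) : ∏ r ∈ Ico 1 d, (1 - x ^ r) = d := by
  obtain ⟨e, rfl⟩ : ∃ e, d = e + 1 := ⟨d - 1, by omega⟩
  rw [prod_Ico_eq_prod_range, Nat.add_sub_cancel]
  simp_rw [add_comm 1]
  exact_mod_cast hx.prod_one_sub_pow_eq_order

theorem IsPrimitiveRoot.prod_range_filter_not_dvd_one_sub_pow [CharZero R] {x : R} {p d : ℕ}
    (hx : IsPrimitiveRoot x d) (hd : 0 < d) (hpd : p ∣ d) :
    ∏ r ∈ range d with ¬p ∣ r, (1 - x ^ r) = p := by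
  obtain ⟨e, rfl⟩ := hpd
  have hp : 0 < p := Nat.pos_of_mul_pos_right hd
  have he : 0 < e := Nat.pos_of_mul_pos_left hd
  have hmultiples : ∏ r ∈ Ico 1 (p * e) with p ∣ r, (1 - x ^ r) = e := by
    rw [mul_comm p, Nat.Ico_one_filter_dvd_eq_image hp,
      prod_image fun a _ b _ h => Nat.eq_of_mul_eq_mul_right hp h]
    simp_rw [mul_comm _ p, pow_mul]
    exact (hx.pow hd rfl).prod_Ico_one_sub_pow he
  have hnonmultiples : {r ∈ range (p * e) | ¬p ∣ r} = {r ∈ Ico 1 (p * e) | ¬p ∣ r} := by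
    ext r
    simp only [mem_filter, mem_range, mem_Ico, and_congr_left_iff]
    intro hr
    have : r ≠ 0 := by rintro rfl; exact hr (dvd_zero p)
    omega
  have hsplit := prod_filter_mul_prod_filter_not (Ico 1 (p * e)) (p ∣ ·) (1 - x ^ ·)
  rw [hmultiples, hx.prod_Ico_one_sub_pow hd, Nat.cast_mul, mul_comm (p : R)] at hsplit
  rw [hnonmultiples]
  exact mul_left_cancel₀ (Nat.cast_ne_zero.mpr he.ne') hsplit

theorem prod_range_filter_not_dvd_one_sub_pow_of_pow_eq_one [CharZero R] {x : R} {p N : ℕ}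
    (hN : 0 < N) (hpN : p ∣ N) (hx : x ^ N = 1) :
    ∏ a ∈ range N with ¬p ∣ a, (1 - x ^ a) =
      if p ∣ orderOf x then (p : R) ^ (N / orderOf x) else 0 := by
  have hdN : orderOf x ∣ N := orderOf_dvd_of_pow_eq_one hx
  have hd : 0 < orderOf x := Nat.pos_of_dvd_of_pos hdN hN
  split_ifs with hpd
  · have hper : Function.Periodic (fun a => if ¬p ∣ a then 1 - x ^ a else 1) (orderOf x) := by
      intro a
      simp only [Nat.dvd_add_left hpd, pow_add, pow_orderOf_eq_one, mul_one]
    obtain ⟨L, rfl⟩ := hdN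
    rw [prod_filter, mul_comm, hper.prod_range_mul, ← prod_filter,
      (IsPrimitiveRoot.orderOf x).prod_range_filter_not_dvd_one_sub_pow hd hpd,
      Nat.mul_div_cancel L hd]
  · refine prod_eq_zero (i := orderOf x) ?_ (by rw [pow_orderOf_eq_one, sub_self])
    refine mem_filter.mpr ⟨mem_range.mpr (lt_of_le_of_ne (Nat.le_of_dvd hN hdN) ?_), hpd⟩
    rintro h
    exact hpd (h ▸ hpN)

end RootsOfUnity

theorem Finset.sum_Icc_one_id_mul_two (q : ℕ) : (∑ k ∈ Icc 1 q, k) * 2 = (q + 1) * q := by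
  rw [← Ico_add_one_right_eq_Icc, sum_Ico_eq_sum_range, Nat.add_sub_cancel]
  have := sum_range_id_mul_two (q + 1)
  rw [sum_range_succ', add_zero, Nat.add_sub_cancel] at this
  simpa only [add_comm 1] using this

theorem two_mul_sum_borwein_exponents (p n : ℕ) :
    2 * ∑ j ∈ range (n + 1), ∑ k ∈ Icc 1 (p - 1), (p * j + k) =
      p * (p - 1) * (n + 1) ^ 2 := by
  obtain _ | q := p
  · simp
  have hinner (j : ℕ) :
      2 * ∑ k ∈ Icc 1 q, ((q + 1) * j + k) = 2 * q * (q + 1) * j + (q + 1) * q := by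
    rw [sum_add_distrib, sum_const, Nat.card_Icc, smul_eq_mul, mul_add,
      mul_comm 2 (∑ k ∈ Icc 1 q, k), sum_Icc_one_id_mul_two, Nat.add_sub_cancel]
    ring
  rw [Nat.add_sub_cancel]
  induction n with
  | zero => simpa using hinner 0
  | succ n ih => rw [sum_range_succ, mul_add, ih, hinner]; ring

theorem natDegree_borweinPoly_le (p s n : ℕ) :
    (borweinPoly p s n).natDegree ≤ borweinDeg p s n := by
  have hfactor (a : ℕ) : ((1 - X ^ a : ℤ[X]) ^ s).natDegree ≤ s * a :=
    natDegree_pow_le.trans (Nat.mul_le_mul_left s ((natDegree_sub_le _ _).trans (by simp)))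
  calc (borweinPoly p s n).natDegree
      ≤ ∑ j ∈ range (n + 1), ∑ k ∈ Icc 1 (p - 1), s * (p * j + k) :=
        (natDegree_prod_le _ _).trans <| sum_le_sum fun j _ =>
          (natDegree_prod_le _ _).trans <| sum_le_sum fun k _ => hfactor _
    _ = borweinDeg p s n := by
        simp_rw [← mul_sum]
        rw [borweinDeg, eq_comm]
        refine Nat.div_eq_of_eq_mul_left two_pos ?_
        rw [mul_right_comm _ s, ← two_mul_sum_borwein_exponents]
        ring

theorem borweinPoly_eq_prod_filter (p s n : ℕ) :
    borweinPoly p s n = ∏ a ∈ range (p * (n + 1)) with ¬p ∣ a, (1 - X ^ a) ^ s := by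
  have hdigits : {r ∈ range p | ¬p ∣ r} = Icc 1 (p - 1) := by
    ext r
    simp only [mem_filter, mem_range, mem_Icc]
    constructor
    · rintro ⟨hr, hpr⟩
      have : r ≠ 0 := by rintro rfl; exact hpr (dvd_zero p)
      omega
    · rintro ⟨h1, hr⟩
      exact ⟨by omega, fun h => absurd (Nat.le_of_dvd h1 h) (by omega)⟩
  rw [prod_filter, mul_comm, prod_range_mul_eq_prod_prod, borweinPoly]
  refine prod_congr rfl fun j _ => ?_
  simp_rw [Nat.dvd_add_right (dvd_mul_left p j), ← hdigits, prod_filter, mul_comm j p]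

theorem aeval_borweinPoly {A : Type*} [CommRing A] (x : A) (p s n : ℕ) :
    aeval x (borweinPoly p s n) =
      ∏ a ∈ range (p * (n + 1)) with ¬p ∣ a, (1 - x ^ a) ^ s := by
  simp [borweinPoly_eq_prod_filter]

section Domain

variable {R : Type*} [CommRing R] [IsDomain R]

theorem IsPrimitiveRoot.natCast_mul_borweinM_eq_sum {ζ : R} {p s n b : ℕ}
    (hζ : IsPrimitiveRoot ζ (p * (n + 1))) (hb : b < p * (n + 1)) :
    (p * (n + 1) : ℕ) * (borweinM p s n b : R) =
      ∑ m ∈ range (p * (n + 1)),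
        (ζ ^ m) ^ (p * (n + 1) - b) * aeval (ζ ^ m) (borweinPoly p s n) := by
  have hdeg : ((borweinPoly p s n).map (Int.castRingHom R)).natDegree <
      (borweinDeg p s n + 1) * (p * (n + 1)) :=
    (natDegree_map_le.trans (natDegree_borweinPoly_le p s n)).trans_lt <|
      Nat.lt_of_lt_of_le (Nat.lt_succ_self _) (Nat.le_mul_of_pos_right _ (by omega))
  simp only [aeval_def, algebraMap_int_eq, ← eval_map]
  rw [hζ.sum_pow_mul_eval_eq hb (by rw [Nat.add_sub_cancel' hb.le]) hdeg]
  simp [borweinM, borweinCoeff]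

theorem aeval_borweinPoly_of_pow_eq_one [CharZero R] {x : R} {p s n : ℕ} (hp : 0 < p)
    (hs : s ≠ 0) (hx : x ^ (p * (n + 1)) = 1) :
    aeval x (borweinPoly p s n) =
      if p ∣ orderOf x then (p : R) ^ (s * (p * (n + 1) / orderOf x)) else 0 := by
  rw [aeval_borweinPoly, prod_pow,
    prod_range_filter_not_dvd_one_sub_pow_of_pow_eq_one (by positivity) (dvd_mul_right p _) hx]
  split_ifs
  · rw [← pow_mul, mul_comm]
  · exact zero_pow hs

theorem pow_mul_aeval_borweinPoly_of_orderOf_eq [CharZero R] {x : R} {p s n c : ℕ} (hp : 0 < p)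
    (hs : s ≠ 0) (hx : orderOf x = p) (hc : p ∣ c) :
    x ^ c * aeval x (borweinPoly p s n) = (p : R) ^ (s * (n + 1)) := by
  rw [orderOf_dvd_iff_pow_eq_one.mp (hx ▸ hc), one_mul,
    aeval_borweinPoly_of_pow_eq_one hp hs (by rw [pow_mul, ← hx, pow_orderOf_eq_one, one_pow]),
    if_pos (hx ▸ dvd_rfl), hx, Nat.mul_div_cancel_left _ hp]

end Domain

theorem IsPrimitiveRoot.orderOf_pow_eq_three_iff {M : Type*} [CommMonoid M] {ζ : M} {K m : ℕ}
    (hζ : IsPrimitiveRoot ζ (3 * K)) (hm : m < 3 * K) :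
    orderOf (ζ ^ m) = 3 ↔ m = K ∨ m = 2 * K := by
  have hcube : IsPrimitiveRoot (ζ ^ K) 3 := hζ.pow (by omega) (mul_comm 3 K)
  constructor
  · intro h3
    have hKm : K ∣ m := by
      have h := (hζ.pow_eq_one_iff_dvd (m * 3)).mp (by rw [pow_mul, ← h3, pow_orderOf_eq_one])
      rw [mul_comm m] at h
      exact Nat.dvd_of_mul_dvd_mul_left three_pos h
    obtain ⟨t, rfl⟩ := hKm
    have ht : t < 3 := by nlinarith
    interval_cases t
    · simp at h3
    · simp
    · simp [mul_comm]
  · rintro (rfl | rfl)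
    · exact hcube.eq_orderOf.symm
    · rw [mul_comm, pow_mul]
      exact (hcube.pow_of_coprime 2 (by norm_num)).eq_orderOf.symm

theorem norm_pow_mul_aeval_borweinPoly_three_two_le {x : ℂ} {n : ℕ} (hx : x ^ (3 * (n + 1)) = 1)
    (hx3 : orderOf x ≠ 3) (c : ℕ) :
    ‖x ^ c * aeval x (borweinPoly 3 2 n)‖ ≤ 3 ^ (n + 1) := by
  rw [norm_mul, norm_pow, Complex.norm_eq_one_of_pow_eq_one hx (by positivity), one_pow, one_mul,
    aeval_borweinPoly_of_pow_eq_one three_pos two_ne_zero hx]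
  split_ifs with h3
  · have hd : 6 ≤ orderOf x := by
      have := Nat.pos_of_dvd_of_pos (orderOf_dvd_of_pow_eq_one hx) (by positivity)
      omega
    have hexp : 2 * (3 * (n + 1) / orderOf x) ≤ n + 1 := by
      have := Nat.div_le_div_left hd (by norm_num : 0 < 6) (a := 3 * (n + 1))
      omega
    rw [norm_pow, Complex.norm_natCast]
    exact_mod_cast pow_le_pow_right₀ (by norm_num) hexp
  · simp

theorem pos_of_abs_three_mul_sub_le {M : ℝ} {K : ℕ}
    (h : |3 * (K : ℝ) * M - 2 * (3 ^ K) ^ 2| ≤ (3 * (K : ℝ) - 2) * 3 ^ K) : 0 < M := by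
  have hbernoulli := one_add_mul_le_pow (show (-2 : ℝ) ≤ 2 by norm_num) K
  norm_num at hbernoulli
  have hpos : 0 < (3 : ℝ) ^ K * (2 * 3 ^ K - (3 * K - 2)) := by
    have : (0 : ℝ) < 3 ^ K := by positivity
    nlinarith
  have : (0 : ℝ) < 3 * K * M := by nlinarith [(abs_le.mp h).1]
  exact pos_of_mul_pos_right this (by positivity)

theorem stmt_4_general (n b : ℕ) (hb : b < 3 * (n + 1)) (hdvd : 3 ∣ b) :
    0 < borweinM 3 2 n b := by
  set K := n + 1
  obtain ⟨ζ, hζ⟩ : ∃ ζ : ℂ, IsPrimitiveRoot ζ (3 * K) :=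
    ⟨_, Complex.isPrimitiveRoot_exp _ (by positivity)⟩
  have hroot (m : ℕ) : (ζ ^ m) ^ (3 * K) = 1 := by rw [pow_right_comm, hζ.pow_eq_one, one_pow]
  have hK : K < 3 * K := by omega
  have h2K : 2 * K < 3 * K := by omega
  have hdvd' : 3 ∣ 3 * K - b := Nat.dvd_sub (dvd_mul_right 3 K) hdvd
  have hbound := norm_sum_sub_add_le (s := range (3 * K))
    (f := fun m => (ζ ^ m) ^ (3 * K - b) * aeval (ζ ^ m) (borweinPoly 3 2 n))
    (mem_range.mpr hK) (mem_range.mpr h2K) (by omega) fun m hm hmK hm2K =>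
      norm_pow_mul_aeval_borweinPoly_three_two_le (hroot m)
        (mt (hζ.orderOf_pow_eq_three_iff (mem_range.mp hm)).mp (by tauto)) _
  rw [← hζ.natCast_mul_borweinM_eq_sum hb, card_range,
    pow_mul_aeval_borweinPoly_of_orderOf_eq three_pos two_ne_zero
      ((hζ.orderOf_pow_eq_three_iff hK).mpr (.inl rfl)) hdvd',
    pow_mul_aeval_borweinPoly_of_orderOf_eq three_pos two_ne_zero
      ((hζ.orderOf_pow_eq_three_iff h2K).mpr (.inr rfl)) hdvd'] at hbound
  have hreal :
      ((3 * K : ℕ) : ℂ) * (borweinM 3 2 n b : ℂ) -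
          ((3 : ℕ) ^ (2 * K) + (3 : ℕ) ^ (2 * K)) =
      (((3 * K : ℝ) * borweinM 3 2 n b - 2 * (3 ^ K) ^ 2 : ℝ) : ℂ) := by
    push_cast
    ring
  rw [hreal, Complex.norm_real, Real.norm_eq_abs, Nat.cast_mul, Nat.cast_ofNat] at hbound
  exact_mod_cast pos_of_abs_three_mul_sub_le hbound

theorem stmt_4 (n b : ℕ) (hn : 1 ≤ n) (hb : b < 3 * (n + 1)) (hdvd : 3 ∣ b) :
    0 < borweinM 3 2 n b :=
  stmt_4_general n b hb hdvd
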